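/- arXiv:1511.06048 — 2 statements merged into one kernel-verified Lean document; each statement's English description precedes it below -/
import Mathlib

section
/- Let L be a first-order language all of whose symbols are function symbols of arity ≥ 1, and let 𝒜 be an orderly L-algebra whose universe ‖𝒜‖ is finite. Then 𝒜 is weakly Ramsey if and only if 𝒜 has a reduction that is a trivial orderly L-algebra (i.e., a constant function on orderly terms). -/
/-!
For a value `c`, reduce `𝒜` along an admissible sequence all of whose terms have value `c`; since
`𝒜` is an orderly algebra, the universe `generated 𝒜 c` of this reduction does not depend on the
sequence. By pigeonhole on the values of an admissible sequence, the universe of every reduction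
contains some `generated 𝒜 c` with `c ∈ generated 𝒜 c`, and `d ∈ generated 𝒜 c` implies
`generated 𝒜 d ⊆ generated 𝒜 c`. The universe being finite, there are `⊆`-minimal generated sets,
each generated by any of its points. If none of them is a singleton, a set `X` choosing one point
from each of them is homogeneous for no reduction. A singleton `generated 𝒜 a = {a}` is the
universe of a trivial reduction.
-/

open Function Set

universe u v w

/-- Terms of a purely functional first-order language whose function symbols
of arity `n` form the type `F n`, with variables indexed by `ℕ`. -/
inductive Tm (F : ℕ → Type u) : Type u
  | var : ℕ → Tm F
  | func : {n : ℕ} → F n → (Fin n → Tm F) → Tm F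

namespace Tm

variable {F : ℕ → Type u} {A : Type v} {β : Type w}

/-- The list of (indices of) variables occurring in a term, from left to right. -/
def varList : Tm F → List ℕ
  | .var i => [i]
  | .func (n := n) _ ts => (List.finRange n).flatMap fun i => (ts i).varList

/-- A term is *orderly* if the indices of the variables occurring in it,
read from left to right, are strictly increasing. -/
def Orderly (t : Tm F) : Prop := t.varList.Chain' (· < ·)

/-- `TermLT s t` iff the index of the last variable of `s` is less than the
index of the first variable of `t`. -/
def TermLT (s t : Tm F) : Prop :=
  ∃ i j, s.varList.getLast? = some i ∧ t.varList.head? = some j ∧ i < j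

/-- An infinite sequence of orderly terms is *admissible* iff it is increasing
with respect to `TermLT`. -/
def Admissible (ts : ℕ → Tm F) : Prop :=
  (∀ i, (ts i).Orderly) ∧ ∀ i, TermLT (ts i) (ts (i + 1))

/-- `s.subst σ` replaces each variable `vᵢ` in `s` by `σ i`. -/
def subst (σ : ℕ → Tm F) : Tm F → Tm F
  | .var i => σ i
  | .func f ts => .func f fun i => (ts i).subst σ

/-- Interpretation of a term in a structure with underlying set `A` whose
interpretation of the function symbols is `I`, under the assignment `a`. -/
def realize (I : ∀ n, F n → (Fin n → A) → A) (a : ℕ → A) : Tm F → A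
  | .var i => a i
  | .func (n := n) f ts => I n f fun i => (ts i).realize I a

end Tm

section General

variable {F : ℕ → Type u} {A : Type v} {β : Type w}

/-- `b` is a reduction of `a` (with respect to the algebra `(A, I)`). -/
def SeqReduction (I : ∀ n, F n → (Fin n → A) → A) (b a : ℕ → A) : Prop :=
  ∃ ts : ℕ → Tm F, Tm.Admissible ts ∧ ∀ i, b i = (ts i).realize I a

/-- The set of finite reductions of `a`. -/
def FR (I : ∀ n, F n → (Fin n → A) → A) (a : ℕ → A) : Set A :=
  { x | ∃ t : Tm F, t.Orderly ∧ x = t.realize I a }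

/-- `(A, I)` is a Ramsey algebra. -/
def RamseyAlg (I : ∀ n, F n → (Fin n → A) → A) : Prop :=
  ∀ (a : ℕ → A) (X : Set A),
    ∃ b, SeqReduction I b a ∧ (FR I b ⊆ X ∨ FR I b ∩ X = ∅)

/-- `(A, I)` is Ramsey below `a`. -/
def RamseyBelow (I : ∀ n, F n → (Fin n → A) → A) (a : ℕ → A) : Prop :=
  ∀ b, SeqReduction I b a → ∀ X : Set A,
    ∃ c, SeqReduction I c b ∧ (FR I c ⊆ X ∨ FR I c ∩ X = ∅)

/-- An increasing tuple `t₁ < t₂ < ⋯ < tₙ` of orderly terms. -/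
def OrdTuple {n : ℕ} (t : Fin n → Tm F) : Prop :=
  (∀ i, (t i).Orderly) ∧ ∀ i j : Fin n, i < j → Tm.TermLT (t i) (t j)

/-- `𝒜` (as a function on orderly terms) is an orderly algebra. -/
def IsOrderlyAlg (𝒜 : Tm F → β) : Prop :=
  ∀ (n : ℕ) (f : F n) (t t' : Fin n → Tm F), OrdTuple t → OrdTuple t' →
    (∀ k, 𝒜 (t k) = 𝒜 (t' k)) → 𝒜 (.func f t) = 𝒜 (.func f t')

/-- The universe of an orderly algebra: its range on orderly terms. -/
def OAUniv (𝒜 : Tm F → β) : Set β := 𝒜 '' { t | t.Orderly }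

/-- `ℬ` is a reduction of the orderly algebra `𝒜` (as functions on orderly terms). -/
def OAReduction (ℬ 𝒜 : Tm F → β) : Prop :=
  ∃ ts : ℕ → Tm F, Tm.Admissible ts ∧ ∀ s : Tm F, s.Orderly → ℬ s = 𝒜 (s.subst ts)

/-- `ℬ` is homogeneous for `X`. -/
def Homog (ℬ : Tm F → β) (X : Set β) : Prop :=
  OAUniv ℬ ⊆ X ∨ OAUniv ℬ ∩ X = ∅

/-- An orderly algebra is weakly Ramsey. -/
def WeaklyRamseyOA (𝒜 : Tm F → β) : Prop :=
  ∀ X ⊆ OAUniv 𝒜, ∃ ℬ, OAReduction ℬ 𝒜 ∧ Homog ℬ X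

/-- An orderly algebra is Ramsey. -/
def RamseyOA (𝒜 : Tm F → β) : Prop :=
  ∀ ℬ, OAReduction ℬ 𝒜 → ∀ X ⊆ OAUniv 𝒜, ∃ 𝒞, OAReduction 𝒞 ℬ ∧ Homog 𝒞 X

/-- The orderly algebra induced from the algebra `(A, I)` by the sequence `a`. -/
def inducedOA (I : ∀ n, F n → (Fin n → A) → A) (a : ℕ → A) : Tm F → A :=
  fun t => t.realize I a

/-- `[FR(c)]ⁿ_<` : increasing `n`-tuples of finite reductions of `c`. -/
def FRtuple (I : ∀ n, F n → (Fin n → A) → A) (n : ℕ) (c : ℕ → A) : Set (Fin n → A) :=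
  { x | ∃ t : Fin n → Tm F, OrdTuple t ∧ ∀ i, x i = (t i).realize I c }

/-- `‖𝒞‖ⁿ_<` for an orderly algebra `𝒞`. -/
def OATuple (n : ℕ) (𝒞 : Tm F → β) : Set (Fin n → β) :=
  { x | ∃ t : Fin n → Tm F, OrdTuple t ∧ ∀ i, x i = 𝒞 (t i) }

/-- The basic set `[n, a]` of the preorder with approximations `(ᵂA, ≤)`. -/
def Approx (I : ∀ n, F n → (Fin n → A) → A) (n : ℕ) (a : ℕ → A) : Set (ℕ → A) :=
  { b | SeqReduction I b a ∧ ∀ i < n, b i = a i }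

/-- The natural topology on `ᵂA`, generated by the sets `[n, a]`. -/
def natTop (I : ∀ n, F n → (Fin n → A) → A) : TopologicalSpace (ℕ → A) :=
  TopologicalSpace.generateFrom { S | ∃ n a, S = Approx I n a }

/-- A subset `X ⊆ ᵂA` is Ramsey. -/
def RamseySet (I : ∀ n, F n → (Fin n → A) → A) (X : Set (ℕ → A)) : Prop :=
  ∀ (n : ℕ) (a : ℕ → A), ∃ b ∈ Approx I n a,
    Approx I n b ⊆ X ∨ Approx I n b ∩ X = ∅

/-- `X` has the property of Baire in the natural topology:
its symmetric difference with some open set is meager. -/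
def HasBaireProperty (I : ∀ n, F n → (Fin n → A) → A) (X : Set (ℕ → A)) : Prop :=
  ∃ U : Set (ℕ → A), @IsOpen _ (natTop I) U ∧ @IsMeagre _ (natTop I) (symmDiff X U)

end General

/-- The language with a single binary function symbol. -/
inductive BinF : ℕ → Type
  | f : BinF 2

/-- Application of the binary function symbol: the term `f s t`. -/
def fapp (s t : Tm BinF) : Tm BinF := .func BinF.f ![s, t]

/-- The interpretation of the single binary function symbol by a binary
operation `g` on `A`. -/
def binI {A : Type v} (g : A → A → A) : ∀ n, BinF n → (Fin n → A) → A
  | _, BinF.f, args => g (args 0) (args 1)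

/-- The pair `(tˣ, tʸ)`: `(vᵢˣ, vᵢʸ) = (v_{2i}, v_{2i+1})` and
`((f s t)ˣ, (f s t)ʸ) = (f sˣ sʸ, f tˣ tʸ)`. -/
def xyPair : Tm BinF → Tm BinF × Tm BinF
  | .var i => (.var (2 * i), .var (2 * i + 1))
  | .func BinF.f ts =>
      (fapp (xyPair (ts 0)).1 (xyPair (ts 0)).2, fapp (xyPair (ts 1)).1 (xyPair (ts 1)).2)

/-- The orderly algebra `♯𝒜`, `♯𝒜(t) = (𝒜(tˣ), 𝒜(tʸ))`. -/
def sharpOA {β : Type w} (𝒜 : Tm BinF → β) : Tm BinF → β × β :=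
  fun t => (𝒜 (xyPair t).1, 𝒜 (xyPair t).2)

namespace Tm

variable {F : ℕ → Type u}

def VarsLT (s t : Tm F) : Prop := ∀ i ∈ s.varList, ∀ j ∈ t.varList, i < j

theorem orderly_iff_pairwise {t : Tm F} : t.Orderly ↔ t.varList.Pairwise (· < ·) :=
  List.isChain_iff_pairwise

theorem orderly_var (i : ℕ) : (var i : Tm F).Orderly := by
  simp [orderly_iff_pairwise, varList]

theorem varList_ne_nil [IsEmpty (F 0)] : ∀ t : Tm F, t.varList ≠ []
  | .var i => by simp [varList]
  | .func (n := n) f ts => by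
      have hn : 0 < n := Nat.pos_of_ne_zero fun h => by subst h; exact isEmptyElim f
      simpa [varList] using ⟨⟨0, hn⟩, varList_ne_nil (ts ⟨0, hn⟩)⟩

theorem VarsLT.trans [IsEmpty (F 0)] {s t r : Tm F} (hst : VarsLT s t) (htr : VarsLT t r) :
    VarsLT s r := by
  intro i hi k hk
  obtain ⟨j, hj⟩ := List.exists_mem_of_ne_nil _ (varList_ne_nil t)
  exact (hst i hi j hj).trans (htr j hj k hk)

theorem termLT_iff_varsLT [IsEmpty (F 0)] {s t : Tm F} (hs : s.Orderly) (ht : t.Orderly) :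
    TermLT s t ↔ VarsLT s t := by
  obtain ⟨i, hi⟩ :=
    Option.ne_none_iff_exists'.1 (mt List.getLast?_eq_none_iff.1 (varList_ne_nil s))
  obtain ⟨j, hj⟩ := Option.ne_none_iff_exists'.1 (mt List.head?_eq_none_iff.1 (varList_ne_nil t))
  have hs' : s.varList.IsChain (· < ·) := hs
  have ht' : t.varList.IsChain (· < ·) := ht
  calc TermLT s t ↔ i < j := by simp [TermLT, hi, hj]
    _ ↔ (s.varList ++ t.varList).IsChain (· < ·) := by simp [List.isChain_append, hi, hj, hs', ht']
    _ ↔ (s.varList ++ t.varList).Pairwise (· < ·) := List.isChain_iff_pairwise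
    _ ↔ VarsLT s t := by
      simp [List.pairwise_append, orderly_iff_pairwise.1 hs, orderly_iff_pairwise.1 ht, VarsLT]

theorem varList_subst (σ : ℕ → Tm F) :
    ∀ t : Tm F, (t.subst σ).varList = t.varList.flatMap fun i => (σ i).varList
  | .var i => by simp [subst, varList]
  | .func f ts => by
      simp only [subst, varList, List.flatMap_assoc]
      exact List.flatMap_congr fun i _ => varList_subst σ (ts i)

theorem subst_subst (σ τ : ℕ → Tm F) :
    ∀ t : Tm F, (t.subst σ).subst τ = t.subst fun i => (σ i).subst τ
  | .var _ => rfl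
  | .func f ts => congrArg (func f) (funext fun i => subst_subst σ τ (ts i))

theorem admissible_iff [IsEmpty (F 0)] {σ : ℕ → Tm F} :
    Admissible σ ↔ (∀ i, (σ i).Orderly) ∧ ∀ ⦃i j⦄, i < j → VarsLT (σ i) (σ j) := by
  refine ⟨fun ⟨hord, hlt⟩ => ⟨hord, ?_⟩, fun ⟨hord, hlt⟩ =>
    ⟨hord, fun i => (termLT_iff_varsLT (hord _) (hord _)).2 (hlt i.lt_succ_self)⟩⟩
  have : IsTrans (Tm F) VarsLT := ⟨fun _ _ _ => VarsLT.trans⟩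
  exact Nat.rel_of_forall_rel_succ_of_lt VarsLT fun i =>
    (termLT_iff_varsLT (hord _) (hord _)).1 (hlt i)

theorem admissible_var_comp {e : ℕ → ℕ} (he : StrictMono e) :
    Admissible (fun i => var (e i) : ℕ → Tm F) :=
  ⟨fun i => orderly_var (e i), fun i => ⟨e i, e (i + 1), rfl, rfl, he i.lt_succ_self⟩⟩

theorem VarsLT.subst {s t : Tm F} (h : VarsLT s t) {σ : ℕ → Tm F}
    (hσ : ∀ ⦃i j⦄, i < j → VarsLT (σ i) (σ j)) : VarsLT (s.subst σ) (t.subst σ) := by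
  simp only [VarsLT, varList_subst, List.mem_flatMap]
  rintro a ⟨i, hi, ha⟩ b ⟨j, hj, hb⟩
  exact hσ (h i hi j hj) a ha b hb

theorem Admissible.orderly_subst [IsEmpty (F 0)] {σ : ℕ → Tm F} (hσ : Admissible σ) {t : Tm F}
    (ht : t.Orderly) : (t.subst σ).Orderly := by
  obtain ⟨hord, hlt⟩ := admissible_iff.1 hσ
  rw [orderly_iff_pairwise, varList_subst, List.pairwise_flatMap]
  exact ⟨fun i _ => orderly_iff_pairwise.1 (hord i),
    (orderly_iff_pairwise.1 ht).imp fun hij => hlt hij⟩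

theorem Admissible.subst [IsEmpty (F 0)] {ρ σ : ℕ → Tm F} (hρ : Admissible ρ)
    (hσ : Admissible σ) : Admissible fun k => (ρ k).subst σ := by
  obtain ⟨hord, hlt⟩ := admissible_iff.1 hρ
  exact admissible_iff.2 ⟨fun k => hσ.orderly_subst (hord k),
    fun k l hkl => (hlt hkl).subst (admissible_iff.1 hσ).2⟩

theorem ordTuple_of_orderly_func [IsEmpty (F 0)] {n : ℕ} {f : F n} {ts : Fin n → Tm F}
    (h : (func f ts).Orderly) : OrdTuple ts := by
  rw [orderly_iff_pairwise, varList, ← List.ofFn_id, List.pairwise_flatMap,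
    List.pairwise_ofFn] at h
  have hord : ∀ i, (ts i).Orderly := fun i => orderly_iff_pairwise.2 (h.1 i (by simp))
  exact ⟨hord, fun i j hij => (termLT_iff_varsLT (hord i) (hord j)).2 (h.2 hij)⟩

theorem exists_admissible_renamings [IsEmpty (F 0)] {s : Tm F} (hs : s.Orderly) :
    ∃ ρ : ℕ → Tm F, Admissible ρ ∧
      ∀ k, ∃ e : ℕ → ℕ, StrictMono e ∧ ρ k = s.subst fun i => .var (e i) := by
  set B := s.varList.sum + 1
  have hB : ∀ i ∈ s.varList, i < B := fun i hi => Nat.lt_succ_of_le (List.le_sum_of_mem hi)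
  have hshift : ∀ k, StrictMono (k * B + ·) := fun k => strictMono_id.const_add (k * B)
  refine ⟨fun k => s.subst fun i => .var (k * B + i), admissible_iff.2 ⟨fun k =>
    (admissible_var_comp (hshift k)).orderly_subst hs, fun k l hkl => ?_⟩,
    fun k => ⟨_, hshift k, rfl⟩⟩
  simp only [VarsLT, varList_subst, List.mem_flatMap, varList, List.mem_singleton]
  rintro _ ⟨i, hi, rfl⟩ _ ⟨j, -, rfl⟩
  have := hB i hi
  have : (k + 1) * B ≤ l * B := Nat.mul_le_mul_right B hkl
  linarith

end Tm

theorem exists_strictMono_forall_eq_of_finite_range {α : Type*} {f : ℕ → α}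
    (hf : (range f).Finite) : ∃ a, ∃ e : ℕ → ℕ, StrictMono e ∧ ∀ k, f (e k) = a := by
  have : Finite (range f) := hf.to_subtype
  obtain ⟨⟨a, _⟩, ha⟩ := Finite.exists_infinite_fiber (rangeFactorization f)
  have hinf : {n | f n = a}.Infinite := by
    refine (infinite_coe_iff.1 ha).mono fun n hn => ?_
    simpa [rangeFactorization] using congrArg Subtype.val hn
  exact ⟨a, Filter.extraction_of_frequently_atTop (Nat.frequently_atTop_iff_infinite.2 hinf)⟩

theorem Homog.of_forall_eq {F : ℕ → Type u} {β : Type w} {ℬ : Tm F → β} {c : β}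
    (hc : ∀ t : Tm F, t.Orderly → ℬ t = c) (X : Set β) : Homog ℬ X := by
  have hℬ : OAUniv ℬ ⊆ {c} := by
    rintro _ ⟨t, ht, rfl⟩
    exact hc t ht
  by_cases hcX : c ∈ X
  · exact Or.inl (hℬ.trans (singleton_subset_iff.2 hcX))
  · exact Or.inr (eq_empty_of_forall_notMem fun y ⟨hy, hyX⟩ => hcX (hℬ hy ▸ hyX))

section Generated

variable {F : ℕ → Type u} {β : Type w} {𝒜 : Tm F → β} {c d : β}

/-- The universe of the reduction of `𝒜` along an admissible sequence of constant value `c`;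
by `IsOrderlyAlg.mem_generated_iff` it does not depend on the sequence. -/
def generated (𝒜 : Tm F → β) (c : β) : Set β :=
  {d | ∃ τ : ℕ → Tm F, Tm.Admissible τ ∧ (∀ k, 𝒜 (τ k) = c) ∧
    ∃ s : Tm F, s.Orderly ∧ 𝒜 (s.subst τ) = d}

theorem self_mem_generated {τ : ℕ → Tm F} (hτ : Tm.Admissible τ) (hτc : ∀ k, 𝒜 (τ k) = c) :
    c ∈ generated 𝒜 c :=
  ⟨τ, hτ, hτc, .var 0, Tm.orderly_var 0, hτc 0⟩

variable [IsEmpty (F 0)]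

theorem IsOrderlyAlg.apply_subst_congr (h𝒜 : IsOrderlyAlg 𝒜) {τ ρ : ℕ → Tm F}
    (hτ : Tm.Admissible τ) (hρ : Tm.Admissible ρ) (hval : ∀ i, 𝒜 (τ i) = 𝒜 (ρ i)) {t : Tm F}
    (ht : t.Orderly) : 𝒜 (t.subst τ) = 𝒜 (t.subst ρ) := by
  induction t with
  | var i => exact hval i
  | func f ts ih =>
    have hts := Tm.ordTuple_of_orderly_func ht
    exact h𝒜 _ f _ _ (Tm.ordTuple_of_orderly_func (hτ.orderly_subst ht))
      (Tm.ordTuple_of_orderly_func (hρ.orderly_subst ht)) fun k => ih k (hts.1 k)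

theorem generated_subset_univ : generated 𝒜 c ⊆ OAUniv 𝒜 := by
  rintro _ ⟨τ, hτ, -, s, hs, rfl⟩
  exact ⟨_, hτ.orderly_subst hs, rfl⟩

theorem IsOrderlyAlg.mem_generated_iff (h𝒜 : IsOrderlyAlg 𝒜) {τ : ℕ → Tm F}
    (hτ : Tm.Admissible τ) (hτc : ∀ k, 𝒜 (τ k) = c) :
    d ∈ generated 𝒜 c ↔ ∃ s : Tm F, s.Orderly ∧ 𝒜 (s.subst τ) = d := by
  refine ⟨?_, fun ⟨s, hs, hd⟩ => ⟨τ, hτ, hτc, s, hs, hd⟩⟩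
  rintro ⟨ρ, hρ, hρc, s, hs, rfl⟩
  exact ⟨s, hs, h𝒜.apply_subst_congr hτ hρ (fun i => (hτc i).trans (hρc i).symm) hs⟩

theorem IsOrderlyAlg.generated_subset_of_mem (h𝒜 : IsOrderlyAlg 𝒜) (hd : d ∈ generated 𝒜 c) :
    d ∈ generated 𝒜 d ∧ generated 𝒜 d ⊆ generated 𝒜 c := by
  obtain ⟨τ, hτ, hτc, s, hs, rfl⟩ := hd
  obtain ⟨ρ, hρ, hρs⟩ := Tm.exists_admissible_renamings hs
  have hσ : Tm.Admissible fun k => (ρ k).subst τ := hρ.subst hτ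
  have hσd : ∀ k, 𝒜 ((ρ k).subst τ) = 𝒜 (s.subst τ) := by
    intro k
    obtain ⟨e, he, hρk⟩ := hρs k
    rw [hρk, Tm.subst_subst]
    exact h𝒜.apply_subst_congr ((Tm.admissible_var_comp he).subst hτ) hτ
      (fun i => (hτc _).trans (hτc i).symm) hs
  refine ⟨self_mem_generated hσ hσd, fun x hx => ?_⟩
  obtain ⟨u, hu, rfl⟩ := (h𝒜.mem_generated_iff hσ hσd).1 hx
  exact ⟨τ, hτ, hτc, u.subst ρ, hρ.orderly_subst hu, by rw [Tm.subst_subst]⟩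

theorem IsOrderlyAlg.exists_generated_subset_univ (h𝒜 : IsOrderlyAlg 𝒜)
    (hfin : (OAUniv 𝒜).Finite) {ℬ : Tm F → β} (hred : OAReduction ℬ 𝒜) :
    ∃ c, c ∈ generated 𝒜 c ∧ generated 𝒜 c ⊆ OAUniv ℬ := by
  obtain ⟨ρ, hρ, hℬ⟩ := hred
  obtain ⟨c, e, he, hρc⟩ := exists_strictMono_forall_eq_of_finite_range (f := fun i => 𝒜 (ρ i))
    (hfin.subset (range_subset_iff.2 fun i => ⟨ρ i, hρ.1 i, rfl⟩))
  have hτ : Tm.Admissible fun k => ρ (e k) := (Tm.admissible_var_comp he).subst hρ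
  refine ⟨c, self_mem_generated hτ hρc, fun x hx => ?_⟩
  obtain ⟨u, hu, rfl⟩ := (h𝒜.mem_generated_iff hτ hρc).1 hx
  have hu' := (Tm.admissible_var_comp he).orderly_subst hu
  exact ⟨_, hu', by rw [hℬ _ hu', Tm.subst_subst]; rfl⟩

theorem IsOrderlyAlg.exists_minimal_generated (h𝒜 : IsOrderlyAlg 𝒜) (hfin : (OAUniv 𝒜).Finite)
    (hc : c ∈ generated 𝒜 c) :
    ∃ d ∈ generated 𝒜 c, ∀ x ∈ generated 𝒜 d, generated 𝒜 x = generated 𝒜 d := by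
  obtain ⟨d, hdc, hmin⟩ := Set.Finite.exists_minimalFor (generated 𝒜) _
    (hfin.subset generated_subset_univ) ⟨c, hc⟩
  refine ⟨d, hdc, fun x hx => ?_⟩
  have hxd := (h𝒜.generated_subset_of_mem hx).2
  exact hxd.antisymm (hmin ((h𝒜.generated_subset_of_mem hdc).2 hx) hxd)

theorem IsOrderlyAlg.exists_generated_eq_singleton (h𝒜 : IsOrderlyAlg 𝒜)
    (hfin : (OAUniv 𝒜).Finite) (hWR : WeaklyRamseyOA 𝒜) : ∃ a, generated 𝒜 a = {a} := by
  have : Nonempty β := ⟨𝒜 (.var 0)⟩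
  let rep : β → β := fun x => Classical.epsilon (· ∈ generated 𝒜 x)
  -- `X` meets every minimal generated set in exactly one point, `rep` of it.
  obtain ⟨ℬ, hred, hhom⟩ := hWR {x ∈ OAUniv 𝒜 | rep x = x} (sep_subset _ _)
  obtain ⟨c, hc, hcℬ⟩ := h𝒜.exists_generated_subset_univ hfin hred
  obtain ⟨d, hdc, hdmin⟩ := h𝒜.exists_minimal_generated hfin hc
  obtain ⟨hd, hdc'⟩ := h𝒜.generated_subset_of_mem hdc
  have hdℬ : generated 𝒜 d ⊆ OAUniv ℬ := hdc'.trans hcℬ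
  have hr : rep d ∈ generated 𝒜 d := Classical.epsilon_spec ⟨d, hd⟩
  have hrep : ∀ y ∈ generated 𝒜 d, rep y = rep d := fun y hy => by simp only [rep, hdmin y hy]
  refine ⟨rep d, (hdmin _ hr).trans (eq_singleton_iff_unique_mem.2 ⟨hr, fun y hy => ?_⟩)⟩
  rcases hhom with hX | hX
  · exact (hX (hdℬ hy)).2.symm.trans (hrep y hy)
  · exact absurd hX (nonempty_iff_ne_empty.1 ⟨rep d, hdℬ hr, generated_subset_univ hr, hrep _ hr⟩)

end Generated

/-- An orderly algebra with finite universe is weakly Ramsey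
iff it has a reduction that is a trivial orderly algebra (constant on orderly
terms). -/
theorem finite_universe_weakly_ramsey_iff {F : ℕ → Type u} [IsEmpty (F 0)]
    {β : Type w} (𝒜 : Tm F → β) (h𝒜 : IsOrderlyAlg 𝒜)
    (hfin : (OAUniv 𝒜).Finite) :
    WeaklyRamseyOA 𝒜 ↔
      ∃ ℬ, OAReduction ℬ 𝒜 ∧ ∃ c : β, ∀ t : Tm F, t.Orderly → ℬ t = c := by
  constructor
  · intro hWR
    obtain ⟨a, ha⟩ := h𝒜.exists_generated_eq_singleton hfin hWR
    obtain ⟨τ, hτ, hτa, -⟩ : a ∈ generated 𝒜 a := ha ▸ mem_singleton a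
    exact ⟨fun s => 𝒜 (s.subst τ), ⟨τ, hτ, fun _ _ => rfl⟩, a,
      fun t ht => mem_singleton_iff.1 (ha ▸ ⟨τ, hτ, hτa, t, ht, rfl⟩)⟩
  · rintro ⟨ℬ, hred, c, hc⟩ X -
    exact ⟨ℬ, hred, Homog.of_forall_eq hc X⟩
end

section
/- Let L be the first-order language with a single binary function symbol f, and define for each orderly term t a pair of terms (tˣ, tʸ) by recursion: (vᵢˣ, vᵢʸ) = (v_{2i}, v_{2i+1}) for all i, and ((f s t)ˣ, (f s t)ʸ) = (f sˣ sʸ, f tˣ tʸ) for orderly terms s < t. Then: (a) for every orderly term t, both tˣ and tʸ are orderly and tˣ < tʸ; and (b) for every orderly L-algebra 𝒜, the function ♯𝒜 defined by ♯𝒜(t) = (𝒜(tˣ), 𝒜(tʸ)) is an orderly L-algebra whose universe is contained in { (𝒜(s), 𝒜(t)) : s, t orderly terms with s < t }. -/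
open Function Set

universe u v w

/-!
Reading the variables of `tˣ` followed by those of `tʸ` gives the variable list of `t` with each
index `i` replaced by the pair `2i, 2i+1`. This doubling preserves strict increase, and both
halves are nonempty, so `tˣ` and `tʸ` are orderly with `tˣ < tʸ`. Part (b) then follows by
applying the orderly-algebra property of `𝒜` to the pairs `sˣ < sʸ` of the two arguments.
-/

theorem Tm.orderly_and_termLT_of_isChain_append {F : ℕ → Type u} {s t : Tm F}
    (hs : s.varList ≠ []) (ht : t.varList ≠ []) (h : (s.varList ++ t.varList).IsChain (· < ·)) :
    s.Orderly ∧ t.Orderly ∧ TermLT s t := by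
  obtain ⟨hs_chain, ht_chain, hcross⟩ := List.isChain_append.mp h
  rw [List.getLast?_eq_some_getLast hs, List.head?_eq_some_head ht] at hcross
  exact ⟨hs_chain, ht_chain, _, _, List.getLast?_eq_some_getLast hs,
    List.head?_eq_some_head ht, hcross _ rfl _ rfl⟩

theorem ordTuple_pair {F : ℕ → Type u} {s t : Tm F} (hs : s.Orderly) (ht : t.Orderly)
    (hst : Tm.TermLT s t) : OrdTuple ![s, t] := by
  refine ⟨fun i => by fin_cases i <;> assumption, fun i j hij => ?_⟩
  fin_cases i <;> fin_cases j <;> first | exact absurd hij (by decide) | exact hst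

theorem varList_fapp (s t : Tm BinF) : (fapp s t).varList = s.varList ++ t.varList := by
  simp [fapp, Tm.varList, List.finRange_succ]

theorem func_f_eq_fapp (ts : Fin 2 → Tm BinF) : Tm.func BinF.f ts = fapp (ts 0) (ts 1) :=
  congrArg (Tm.func BinF.f) (FinVec.etaExpand_eq ts).symm

theorem xyPair_fapp (s t : Tm BinF) :
    xyPair (fapp s t) = (fapp (xyPair s).1 (xyPair s).2, fapp (xyPair t).1 (xyPair t).2) :=
  rfl

theorem Tm.varList_ne_nil_s17 : ∀ t : Tm BinF, t.varList ≠ []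
  | .var _ => List.cons_ne_nil _ _
  | .func BinF.f ts => by
    rw [func_f_eq_fapp, varList_fapp]
    exact List.append_ne_nil_of_left_ne_nil (Tm.varList_ne_nil_s17 (ts 0)) _

theorem varList_xyPair : ∀ t : Tm BinF,
    (xyPair t).1.varList ++ (xyPair t).2.varList = t.varList.flatMap fun i => [2 * i, 2 * i + 1]
  | .var _ => rfl
  | .func BinF.f ts => by
    rw [func_f_eq_fapp, xyPair_fapp, varList_fapp, varList_fapp, varList_fapp,
      List.flatMap_append, ← varList_xyPair (ts 0), ← varList_xyPair (ts 1), List.append_assoc]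

theorem List.isChain_flatMap_double {l : List ℕ} (hl : l.IsChain (· < ·)) :
    (l.flatMap fun i => [2 * i, 2 * i + 1]).IsChain (· < ·) := by
  rw [List.isChain_iff_pairwise] at hl ⊢
  refine List.pairwise_flatMap.mpr ⟨fun _ _ => by simp, hl.imp fun hij => ?_⟩
  simp only [List.mem_cons, List.not_mem_nil, or_false]
  rintro _ (rfl | rfl) _ (rfl | rfl) <;> omega

theorem Tm.Orderly.xyPair {t : Tm BinF} (ht : t.Orderly) :
    (xyPair t).1.Orderly ∧ (xyPair t).2.Orderly ∧ Tm.TermLT (xyPair t).1 (xyPair t).2 :=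
  Tm.orderly_and_termLT_of_isChain_append (Tm.varList_ne_nil_s17 _) (Tm.varList_ne_nil_s17 _)
    (varList_xyPair t ▸ List.isChain_flatMap_double ht)

theorem IsOrderlyAlg.map_fapp {β : Type w} {𝒜 : Tm BinF → β} (h𝒜 : IsOrderlyAlg 𝒜)
    {s t s' t' : Tm BinF} (hs : s.Orderly) (ht : t.Orderly) (hst : Tm.TermLT s t)
    (hs' : s'.Orderly) (ht' : t'.Orderly) (hst' : Tm.TermLT s' t')
    (h₁ : 𝒜 s = 𝒜 s') (h₂ : 𝒜 t = 𝒜 t') : 𝒜 (fapp s t) = 𝒜 (fapp s' t') :=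
  h𝒜 2 BinF.f ![s, t] ![s', t'] (ordTuple_pair hs ht hst) (ordTuple_pair hs' ht' hst')
    fun k => by fin_cases k <;> assumption

theorem IsOrderlyAlg.sharpOA {β : Type w} {𝒜 : Tm BinF → β} (h𝒜 : IsOrderlyAlg 𝒜) :
    IsOrderlyAlg (sharpOA 𝒜) := by
  rintro _ ⟨⟩ t t' ht ht' heq
  have hmap (k : Fin 2) := h𝒜.map_fapp (ht.1 k).xyPair.1 (ht.1 k).xyPair.2.1
    (ht.1 k).xyPair.2.2 (ht'.1 k).xyPair.1 (ht'.1 k).xyPair.2.1 (ht'.1 k).xyPair.2.2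
    (Prod.ext_iff.mp (heq k)).1 (Prod.ext_iff.mp (heq k)).2
  exact Prod.ext (hmap 0) (hmap 1)

/-- (a) For every orderly term `t`, both `tˣ` and `tʸ` are
orderly and `tˣ < tʸ`; (b) for every orderly algebra `𝒜`, `♯𝒜` is an orderly
algebra whose universe is contained in `{(𝒜 s, 𝒜 t) : s < t orderly}`. -/
theorem sharp_well_defined :
    (∀ t : Tm BinF, t.Orderly →
      (xyPair t).1.Orderly ∧ (xyPair t).2.Orderly ∧
        Tm.TermLT (xyPair t).1 (xyPair t).2) ∧
    (∀ (β : Type w) (𝒜 : Tm BinF → β), IsOrderlyAlg 𝒜 →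
      IsOrderlyAlg (sharpOA 𝒜) ∧
      OAUniv (sharpOA 𝒜) ⊆
        { p : β × β | ∃ s t : Tm BinF,
            s.Orderly ∧ t.Orderly ∧ Tm.TermLT s t ∧ p = (𝒜 s, 𝒜 t) }) := by
  refine ⟨fun t ht => ht.xyPair, fun β 𝒜 h𝒜 => ⟨h𝒜.sharpOA, ?_⟩⟩
  rintro _ ⟨t, ht, rfl⟩
  exact ⟨_, _, ht.xyPair.1, ht.xyPair.2.1, ht.xyPair.2.2, rfl⟩
end
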